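/- Let G be a finite group, F a field of characteristic p > 0, and P a p-subgroup of G. Then I_G(P) := Σ FC⁺, summing over conjugacy classes C whose defect group is G-conjugate to a subgroup of P, is an ideal of Z(FG). -/

import Mathlib

set_option synthInstance.maxHeartbeats 400000

/-- The class sum `C⁺ = ∑_{x ∈ C} x` of a conjugacy class `C` of `G`. -/
noncomputable def classSum (F : Type*) [Field F] (G : Type*) [Group G] [Fintype G]
    (C : ConjClasses G) : MonoidAlgebra F G :=
  ∑ x ∈ (Set.toFinite C.carrier).toFinset, MonoidAlgebra.single x (1 : F)

/-- `D` is a defect group of the conjugacy class `C`: a Sylow `p`-subgroup of the centralizer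
`C_G(x)` of some `x ∈ C`, viewed as a subgroup of `G`. -/
def IsDefectGroup (p : ℕ) {G : Type*} [Group G] (C : ConjClasses G) (D : Subgroup G) : Prop :=
  ∃ x ∈ C.carrier, ∃ Q : Sylow p ↥(Subgroup.centralizer {x}),
    D = Subgroup.map (Subgroup.centralizer {x}).subtype Q.toSubgroup

/-- `δ(C) ≤_G P`: some defect group of `C` has a `G`-conjugate contained in `P`. -/
def DefectLE (p : ℕ) {G : Type*} [Group G] (C : ConjClasses G) (P : Subgroup G) : Prop :=
  ∃ D : Subgroup G, IsDefectGroup p C D ∧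
    ∃ g : G, Subgroup.map (MulAut.conj g).toMonoidHom D ≤ P

/-- The `F`-span `I_G(P)` of the class sums `C⁺` with `δ(C) ≤_G P`. -/
noncomputable def IGP (F : Type*) [Field F] (p : ℕ) (G : Type*) [Group G] [Fintype G]
    (P : Subgroup G) : Submodule F (MonoidAlgebra F G) :=
  Submodule.span F {z | ∃ C : ConjClasses G, DefectLE p C P ∧ z = classSum F G C}

/-!
A central element `a` has coefficients constant on conjugacy classes, so `a * C⁺` is a linear
combination of class sums, and it suffices to show `δ(E) ≤_G P` for every class `E ∋ e` at which
`a * C⁺` has a nonzero coefficient. That coefficient is `∑_{v ∈ C} a(e v⁻¹)`, and conjugation by a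
Sylow `p`-subgroup `Q` of `C_G(e)` permutes its terms without changing them. Since `Q` is a
`p`-group and `char F = p`, only the `Q`-fixed `v` contribute, so `Q` centralizes some `v ∈ C`.
By Sylow's theorems in `C_G(v)`, the `p`-subgroup `Q` is then conjugate into every defect group
of `C`, and hence into `P`.
-/

namespace MonoidAlgebra

variable {R G : Type*} [CommSemiring R] [Group G]

theorem mem_center_iff_forall_single_mul_comm {w : MonoidAlgebra R G} :
    w ∈ Subalgebra.center R (MonoidAlgebra R G) ↔ ∀ g : G, single g 1 * w = w * single g 1 := by
  refine ⟨fun hw g => Subalgebra.mem_center_iff.mp hw _, fun hw => ?_⟩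
  refine Subalgebra.mem_center_iff.mpr fun b => ?_
  induction b using MonoidAlgebra.induction_on with
  | of g => exact hw g
  | add x y hx hy => rw [add_mul, mul_add, hx, hy]
  | smul r x hx => rw [smul_mul_assoc, mul_smul_comm, hx]

theorem mem_center_iff_coeff_conj {w : MonoidAlgebra R G} :
    w ∈ Subalgebra.center R (MonoidAlgebra R G) ↔
      ∀ g x : G, w.coeff (g * x * g⁻¹) = w.coeff x := by
  rw [mem_center_iff_forall_single_mul_comm]
  refine forall_congr' fun g => ?_
  rw [← coeff_inj, DFunLike.ext_iff]
  simp only [coeff_single_mul_apply, coeff_mul_single_apply, one_mul, mul_one]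
  constructor
  · intro h x
    simpa [mul_assoc] using (h (g * x)).symm
  · intro h y
    simpa [mul_assoc] using (h (g⁻¹ * y)).symm

end MonoidAlgebra

open MonoidAlgebra

theorem ConjClasses.conj_mem_carrier_iff {G : Type*} [Group G] {C : ConjClasses G} {g x : G} :
    g * x * g⁻¹ ∈ C.carrier ↔ x ∈ C.carrier := by
  simp only [mem_carrier_iff_mk_eq,
    mk_eq_mk_iff_isConj.mpr (isConj_iff.mpr ⟨g, rfl⟩ : IsConj x (g * x * g⁻¹)).symm]

theorem coeff_classSum (F : Type*) [Field F] (G : Type*) [Group G] [Fintype G]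
    (C : ConjClasses G) : ⇑(classSum F G C).coeff = C.carrier.indicator 1 := by
  classical
  ext x
  simp [classSum, coeff_sum, Finsupp.single_apply, Set.indicator_apply]

theorem classSum_mem_center (F : Type*) [Field F] (G : Type*) [Group G] [Fintype G]
    (C : ConjClasses G) : classSum F G C ∈ Subalgebra.center F (MonoidAlgebra F G) := by
  classical
  refine mem_center_iff_coeff_conj.mpr fun g x => ?_
  simp only [coeff_classSum, Set.indicator_apply, ConjClasses.conj_mem_carrier_iff,
    Pi.one_apply]

theorem exists_eq_sum_smul_classSum_of_mem_center {F : Type*} [Field F] {G : Type*} [Group G]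
    [Fintype G] [Fintype (ConjClasses G)] {w : MonoidAlgebra F G}
    (hw : w ∈ Subalgebra.center F (MonoidAlgebra F G)) :
    ∃ c : ConjClasses G → F, (∀ x, c (ConjClasses.mk x) = w.coeff x) ∧
      w = ∑ C, c C • classSum F G C := by
  have hw' := mem_center_iff_coeff_conj.mp hw
  have hc : ∀ x, w.coeff (ConjClasses.mk x).exists_rep.choose = w.coeff x := fun x => by
    obtain ⟨g, hg⟩ := isConj_iff.mp (ConjClasses.mk_eq_mk_iff_isConj.mp
      (ConjClasses.mk x).exists_rep.choose_spec)
    rw [← hw' g, hg]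
  refine ⟨fun C => w.coeff C.exists_rep.choose, hc, ?_⟩
  ext x
  rw [coeff_sum, Finset.sum_apply', Finset.sum_eq_single (ConjClasses.mk x)]
  · simp [coeff_classSum, hc, ConjClasses.mem_carrier_mk]
  · intro C _ hC
    simp [coeff_classSum, ConjClasses.mem_carrier_iff_mk_eq, Ne.symm hC]
  · simp

theorem mem_span_classSum_of_mem_center {F : Type*} [Field F] {G : Type*} [Group G]
    [Fintype G] {S : ConjClasses G → Prop} {w : MonoidAlgebra F G}
    (hw : w ∈ Subalgebra.center F (MonoidAlgebra F G))
    (hS : ∀ x, w.coeff x ≠ 0 → S (ConjClasses.mk x)) :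
    w ∈ Submodule.span F {z | ∃ C, S C ∧ z = classSum F G C} := by
  have := Fintype.ofFinite (ConjClasses G)
  obtain ⟨c, hc, hwc⟩ := exists_eq_sum_smul_classSum_of_mem_center hw
  rw [hwc]
  refine Submodule.sum_mem _ fun C _ => ?_
  obtain ⟨x, rfl⟩ := ConjClasses.mk_surjective C
  by_cases hx : w.coeff x = 0
  · simp [hc, hx]
  · exact Submodule.smul_mem _ _ (Submodule.subset_span ⟨_, hS x hx, rfl⟩)

open MulAction in
theorem IsPGroup.sum_eq_zero_of_eq_zero_on_fixedPoints {p : ℕ} [Fact p.Prime]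
    {H α R : Type*} [Group H] [MulAction H α] [Fintype α] [Semiring R] [CharP R p]
    (hH : IsPGroup p H) {f : α → R} (hf : ∀ (h : H) (a : α), f (h • a) = f a)
    (hfix : ∀ a ∈ fixedPoints H α, f a = 0) :
    ∑ a, f a = 0 := by
  classical
  refine Finset.sum_cancels_of_partition_cancels (orbitRel H α) fun x _ => ?_
  have horbit : Finset.univ.filter (fun a => orbitRel H α a x) = (orbit H x).toFinset := by
    ext a
    simp [orbitRel_apply]
  have hconst : ∀ a ∈ (orbit H x).toFinset, f a = f x := by
    intro a ha
    obtain ⟨h, rfl⟩ := Set.mem_toFinset.mp ha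
    exact hf h x
  rw [horbit, Finset.sum_congr rfl hconst, Finset.sum_const]
  by_cases hx : x ∈ fixedPoints H α
  · rw [hfix x hx, smul_zero]
  obtain ⟨n, hn⟩ := hH.card_orbit x
  have hn0 : n ≠ 0 := by
    rintro rfl
    rw [mem_fixedPoints_iff_card_orbit_eq_one, Fintype.card_eq_nat_card, hn, pow_zero] at hx
    exact hx rfl
  rw [Set.toFinset_card, Fintype.card_eq_nat_card, hn, nsmul_eq_mul, Nat.cast_pow,
    CharP.cast_eq_zero, zero_pow hn0, zero_mul]

theorem coeff_mul_classSum {F : Type*} [Field F] {G : Type*} [Group G] [Fintype G]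
    (a : MonoidAlgebra F G) (C : ConjClasses G) (e : G) :
    (a * classSum F G C).coeff e = ∑ v, a.coeff (e * v⁻¹) * C.carrier.indicator 1 v := by
  rw [coeff_mul_apply_right, Finsupp.sum_fintype _ _ (by simp), coeff_classSum]

theorem exists_mem_carrier_le_centralizer_of_coeff_mul_classSum_ne_zero {F : Type*} [Field F]
    {p : ℕ} [Fact p.Prime] [CharP F p] {G : Type*} [Group G] [Fintype G] {K : Subgroup G}
    (hK : IsPGroup p K) {e : G} (hKe : K ≤ Subgroup.centralizer {e}) {a : MonoidAlgebra F G}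
    (ha : a ∈ Subalgebra.center F (MonoidAlgebra F G)) {C : ConjClasses G}
    (he : (a * classSum F G C).coeff e ≠ 0) :
    ∃ v ∈ C.carrier, K ≤ Subgroup.centralizer {v} := by
  classical
  let H := K.map (ConjAct.toConjAct : G ≃* ConjAct G).toMonoidHom
  have hfixed : ∀ v ∈ MulAction.fixedPoints H G, K ≤ Subgroup.centralizer {v} := by
    intro v hv k hk
    have hkv : k * v * k⁻¹ = v := hv ⟨ConjAct.toConjAct k, k, hk, rfl⟩
    exact Subgroup.mem_centralizer_singleton_iff.mpr (mul_inv_eq_iff_eq_mul.mp hkv)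
  by_contra! hno
  apply he
  rw [coeff_mul_classSum]
  refine (hK.map _).sum_eq_zero_of_eq_zero_on_fixedPoints (H := H) ?_ fun v hv => ?_
  · rintro ⟨_, k, hk, rfl⟩ v
    have hke : k * e = e * k := Subgroup.mem_centralizer_singleton_iff.mp (hKe hk)
    have hconj : e * (k * v * k⁻¹)⁻¹ = k * (e * v⁻¹) * k⁻¹ := by
      simp only [mul_inv_rev, inv_inv, ← mul_assoc, hke]
    simp only [Subgroup.smul_def, ConjAct.smul_def, MulEquiv.coe_toMonoidHom,
      ConjAct.ofConjAct_toConjAct, hconj, mem_center_iff_coeff_conj.mp ha, Set.indicator_apply,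
      ConjClasses.conj_mem_carrier_iff, Pi.one_apply]
  · by_cases hvC : v ∈ C.carrier
    · exact absurd (hfixed v hv) (hno v hvC)
    · simp [hvC]

theorem Subgroup.map_conj_mul {G : Type*} [Group G] (g c : G) (K : Subgroup G) :
    K.map (MulAut.conj (g * c)).toMonoidHom =
      (K.map (MulAut.conj c).toMonoidHom).map (MulAut.conj g).toMonoidHom := by
  rw [map_map]
  congr 1
  ext x
  simp [mul_assoc]

open Subgroup in
theorem IsDefectGroup.exists_map_conj_le {p : ℕ} [Fact p.Prime] {G : Type*} [Group G] [Finite G]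
    {C : ConjClasses G} {D : Subgroup G} (hD : IsDefectGroup p C D) {K : Subgroup G}
    (hK : IsPGroup p K) {y : G} (hy : y ∈ C.carrier) (hKy : K ≤ centralizer {y}) :
    ∃ g : G, K.map (MulAut.conj g).toMonoidHom ≤ D := by
  obtain ⟨x, hx, Q, rfl⟩ := hD
  obtain ⟨c, rfl⟩ : ∃ c, c * y * c⁻¹ = x := isConj_iff.mp <| ConjClasses.mk_eq_mk_iff_isConj.mp <|
    (ConjClasses.mem_carrier_iff_mk_eq.mp hy).trans (ConjClasses.mem_carrier_iff_mk_eq.mp hx).symm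
  have hcK : ∀ k ∈ K, c * k * c⁻¹ ∈ centralizer {c * y * c⁻¹} := by
    intro k hk
    have hky : k * y = y * k := mem_centralizer_singleton_iff.mp (hKy hk)
    rw [mem_centralizer_singleton_iff]
    simp only [mul_assoc, inv_mul_cancel_left]
    rw [← mul_assoc k, hky, mul_assoc]
  let K' := (K.map (MulAut.conj c).toMonoidHom).comap (centralizer {c * y * c⁻¹}).subtype
  obtain ⟨R, hK'R⟩ := ((hK.map _).comap_subtype : IsPGroup p K').exists_le_sylow
  obtain ⟨h, rfl⟩ := MulAction.exists_smul_eq (centralizer {c * y * c⁻¹}) R Q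
  refine ⟨h * c, ?_⟩
  rintro _ ⟨k, hk, rfl⟩
  have hkR : (⟨c * k * c⁻¹, hcK k hk⟩ : centralizer {c * y * c⁻¹}) ∈ R :=
    hK'R ⟨k, hk, rfl⟩
  refine ⟨h * ⟨c * k * c⁻¹, hcK k hk⟩ * h⁻¹, ?_, ?_⟩
  · rw [Sylow.coe_subgroup_smul]
    exact smul_mem_pointwise_smul _ (MulAut.conj h) _ hkR
  · simp [mul_assoc]

theorem DefectLE.of_coeff_mul_classSum_ne_zero {F : Type*} [Field F] {p : ℕ} [Fact p.Prime]
    [CharP F p] {G : Type*} [Group G] [Fintype G] {C : ConjClasses G} {P : Subgroup G}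
    (hC : DefectLE p C P) {a : MonoidAlgebra F G}
    (ha : a ∈ Subalgebra.center F (MonoidAlgebra F G)) {e : G}
    (he : (a * classSum F G C).coeff e ≠ 0) :
    DefectLE p (ConjClasses.mk e) P := by
  obtain ⟨Q⟩ : Nonempty (Sylow p (Subgroup.centralizer {e})) := inferInstance
  have hQ : IsPGroup p (Q.map (Subgroup.centralizer {e}).subtype) := Q.2.map _
  obtain ⟨v, hvC, hQv⟩ :=
    exists_mem_carrier_le_centralizer_of_coeff_mul_classSum_ne_zero hQ
      (Subgroup.map_subtype_le _) ha he
  obtain ⟨D, hD, g, hDP⟩ := hC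
  obtain ⟨c, hQD⟩ := hD.exists_map_conj_le hQ hvC hQv
  refine ⟨_, ⟨e, ConjClasses.mem_carrier_mk, Q, rfl⟩, g * c, ?_⟩
  rw [Subgroup.map_conj_mul]
  exact (Subgroup.map_mono hQD).trans hDP

theorem stmt_8_general (F : Type*) [Field F] (p : ℕ) [Fact p.Prime] [CharP F p]
    (G : Type*) [Group G] [Fintype G] (P : Subgroup G) :
    (∀ z ∈ IGP F p G P, z ∈ Subalgebra.center F (MonoidAlgebra F G)) ∧
    (∀ a ∈ Subalgebra.center F (MonoidAlgebra F G), ∀ z ∈ IGP F p G P,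
      a * z ∈ IGP F p G P) := by
  refine ⟨fun z hz => ?_, fun a ha z hz => ?_⟩
  · have hle : IGP F p G P ≤ Subalgebra.toSubmodule (Subalgebra.center F (MonoidAlgebra F G)) :=
      Submodule.span_le.mpr fun _ ⟨C, _, hz⟩ => hz ▸ classSum_mem_center F G C
    exact hle hz
  · induction hz using Submodule.span_induction with
    | mem _ hC =>
      obtain ⟨C, hC, rfl⟩ := hC
      exact mem_span_classSum_of_mem_center (mul_mem ha (classSum_mem_center F G C))
        fun e he => hC.of_coeff_mul_classSum_ne_zero ha he
    | zero => simp
    | add x y _ _ hx hy => rw [mul_add]; exact add_mem hx hy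
    | smul r x _ hx => rw [mul_smul_comm]; exact Submodule.smul_mem _ r hx

/-- `I_G(P)` is an ideal of the center `Z(FG)`: it is contained in `Z(FG)` and closed under
multiplication by elements of `Z(FG)`. -/
theorem stmt_8 (F : Type*) [Field F] (p : ℕ) [Fact p.Prime] [CharP F p]
    (G : Type*) [Group G] [Fintype G] (P : Subgroup G) (hP : IsPGroup p P) :
    (∀ z ∈ IGP F p G P, z ∈ Subalgebra.center F (MonoidAlgebra F G)) ∧
    (∀ a ∈ Subalgebra.center F (MonoidAlgebra F G), ∀ z ∈ IGP F p G P,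
      a * z ∈ IGP F p G P) :=
  stmt_8_general F p G P
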